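/- For every indecomposable pattern q, the limit lim_{n→∞} (Sav_n(q))^{1/n} exists. -/

import Mathlib

open Finset

def PatternContains {n k : ℕ} (p : Equiv.Perm (Fin n)) (q : Equiv.Perm (Fin k)) : Prop :=
  ∃ f : Fin k → Fin n, StrictMono f ∧ ∀ r s : Fin k, q r < q s ↔ p (f r) < p (f s)

def PatternAvoids {n k : ℕ} (p : Equiv.Perm (Fin n)) (q : Equiv.Perm (Fin k)) : Prop :=
  ¬ PatternContains p q

def StronglyAvoids {n k : ℕ} (p : Equiv.Perm (Fin n)) (q : Equiv.Perm (Fin k)) : Prop :=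
  PatternAvoids p q ∧ PatternAvoids (p * p) q

def Indecomposable {k : ℕ} (q : Equiv.Perm (Fin k)) : Prop :=
  ¬ ∃ j : ℕ, 1 ≤ j ∧ j < k ∧ ∀ a b : Fin k, (a : ℕ) < j → j ≤ (b : ℕ) → q a < q b

noncomputable def SavQ {k : ℕ} (q : Equiv.Perm (Fin k)) (n : ℕ) : ℕ :=
  Nat.card {p : Equiv.Perm (Fin n) // StronglyAvoids p q}


/-- containment of a permutation pattern in a point set -/
def MContains {k : ℕ} (M : Finset (ℕ × ℕ)) (q : Equiv.Perm (Fin k)) : Prop :=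
  ∃ x y : Fin k → ℕ, StrictMono x ∧ StrictMono y ∧ ∀ i, (x i, y (q i)) ∈ M

lemma mcontains_swap {k : ℕ} {M : Finset (ℕ × ℕ)} {q : Equiv.Perm (Fin k)}
    (h : MContains M q) : MContains (M.image Prod.swap) q⁻¹ := by
  obtain ⟨x, y, hx, hy, hm⟩ := h
  refine ⟨y, x, hy, hx, fun j => ?_⟩
  have := hm (q⁻¹ j)
  simp only [Equiv.Perm.inv_def, Equiv.apply_symm_apply] at this
  exact Finset.mem_image.2 ⟨_, this, rfl⟩

lemma swap_swap_image (M : Finset (ℕ × ℕ)) : (M.image Prod.swap).image Prod.swap = M := by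
  rw [Finset.image_image]; simp

lemma mavoids_swap {k : ℕ} {M : Finset (ℕ × ℕ)} {q : Equiv.Perm (Fin k)}
    (h : ¬ MContains M q) : ¬ MContains (M.image Prod.swap) q⁻¹ := by
  intro hc
  have := mcontains_swap hc
  rw [swap_swap_image, inv_inv] at this
  exact h this

lemma nat_lt_of_div_lt {a b s : ℕ} (h : a / s < b / s) : a < b := by
  by_contra hc
  exact absurd (Nat.div_le_div_right (Nat.le_of_not_lt hc)) (Nat.not_le_of_lt h)

/-- contraction of a point set by blocks of size s -/
def mcontract (s : ℕ) (M : Finset (ℕ × ℕ)) : Finset (ℕ × ℕ) :=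
  M.image (fun p => (p.1 / s, p.2 / s))

lemma mcontains_of_contract {k s : ℕ} {M : Finset (ℕ × ℕ)} {q : Equiv.Perm (Fin k)}
    (h : MContains (mcontract s M) q) : MContains M q := by
  obtain ⟨x, y, hx, hy, hm⟩ := h
  have hpt : ∀ i : Fin k, ∃ p : ℕ × ℕ, p ∈ M ∧ p.1 / s = x i ∧ p.2 / s = y (q i) := by
    intro i
    obtain ⟨p, hp, he⟩ := Finset.mem_image.1 (hm i)
    exact ⟨p, hp, congrArg Prod.fst he, congrArg Prod.snd he⟩
  choose pt hptM hpt1 hpt2 using hpt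
  refine ⟨fun i => (pt i).1, fun j => (pt (q⁻¹ j)).2, ?_, ?_, ?_⟩
  · intro a b hab
    apply nat_lt_of_div_lt (s := s)
    rw [hpt1, hpt1]
    exact hx hab
  · intro a b hab
    apply nat_lt_of_div_lt (s := s)
    rw [hpt2, hpt2]
    exact hy (by simpa using hab)
  · intro i
    simp only [Equiv.Perm.inv_def, Equiv.symm_apply_apply]
    exact hptM i

def mfiber (s : ℕ) (M : Finset (ℕ × ℕ)) (b : ℕ × ℕ) : Finset (ℕ × ℕ) :=
  M.filter (fun p => (p.1 / s, p.2 / s) = b)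

def mWide (s k : ℕ) (M : Finset (ℕ × ℕ)) : Finset (ℕ × ℕ) :=
  (M.image (fun p => (p.1 / s, p.2 / s))).filter
    (fun b => k ≤ ((mfiber s M b).image Prod.snd).card)

def mTall (s k : ℕ) (M : Finset (ℕ × ℕ)) : Finset (ℕ × ℕ) :=
  (M.image (fun p => (p.1 / s, p.2 / s))).filter
    (fun b => k ≤ ((mfiber s M b).image Prod.fst).card)

lemma mfiber_snd_subset {s : ℕ} {M : Finset (ℕ × ℕ)} (hs : 1 ≤ s) {b : ℕ × ℕ} :
    (mfiber s M b).image Prod.snd ⊆ Finset.Ico (b.2 * s) (b.2 * s + s) := by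
  intro y hy
  obtain ⟨p, hp, rfl⟩ := Finset.mem_image.1 hy
  have h2 : p.2 / s = b.2 := congrArg Prod.snd ((Finset.mem_filter.1 hp).2)
  rw [Finset.mem_Ico, ← h2]
  constructor
  · exact Nat.div_mul_le_self _ _
  · have h1 := Nat.div_add_mod' p.2 s
    have h2 := Nat.mod_lt p.2 hs
    omega

lemma mfiber_fst_subset {s : ℕ} {M : Finset (ℕ × ℕ)} (hs : 1 ≤ s) {b : ℕ × ℕ} :
    (mfiber s M b).image Prod.fst ⊆ Finset.Ico (b.1 * s) (b.1 * s + s) := by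
  intro y hy
  obtain ⟨p, hp, rfl⟩ := Finset.mem_image.1 hy
  have h2 : p.1 / s = b.1 := congrArg Prod.fst ((Finset.mem_filter.1 hp).2)
  rw [Finset.mem_Ico, ← h2]
  constructor
  · exact Nat.div_mul_le_self _ _
  · have h1 := Nat.div_add_mod' p.1 s
    have h2 := Nat.mod_lt p.1 hs
    omega

/-- The key extremal lemma: few wide blocks per strip. -/
lemma wide_card_le {k s t : ℕ} {M : Finset (ℕ × ℕ)} {q : Equiv.Perm (Fin k)}
    (hs : 1 ≤ s) (hk : 1 ≤ k)
    (hM : ∀ p ∈ M, p.2 < s * t) (havoid : ¬ MContains M q) :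
    (mWide s k M).card ≤ t * ((s.choose k) * (k - 1)) := by
  have hmapsto : ∀ b ∈ mWide s k M, b.2 ∈ Finset.range t := by
    intro b hb
    obtain ⟨p, hp, rfl⟩ := Finset.mem_image.1 (Finset.mem_filter.1 hb).1
    exact Finset.mem_range.2 (Nat.div_lt_of_lt_mul (by rw [mul_comm] at *; exact hM p hp))
  rw [Finset.card_eq_sum_card_fiberwise hmapsto]
  have key : ∀ J ∈ Finset.range t,
      ((mWide s k M).filter (fun b => b.2 = J)).card ≤ (s.choose k) * (k - 1) := by
    intro J _
    by_contra hlt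
    push_neg at hlt
    set WJ := (mWide s k M).filter (fun b => b.2 = J) with hWJ
    have hpick : ∀ b : ℕ × ℕ, b ∈ mWide s k M →
        ∃ S : Finset ℕ, S ⊆ (mfiber s M b).image Prod.snd ∧ S.card = k := by
      intro b hb
      exact Finset.exists_subset_card_eq (Finset.mem_filter.1 hb).2
    classical
    choose! pick hpick1 hpick2 using hpick
    have hmaps : ∀ b ∈ WJ, pick b ∈ (Finset.Ico (J * s) (J * s + s)).powersetCard k := by
      intro b hb
      have hbW : b ∈ mWide s k M := (Finset.mem_filter.1 hb).1
      have hbJ : b.2 = J := (Finset.mem_filter.1 hb).2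
      rw [Finset.mem_powersetCard]
      refine ⟨(hpick1 b hbW).trans ?_, hpick2 b hbW⟩
      rw [← hbJ]
      exact mfiber_snd_subset hs
    have hcard : ((Finset.Ico (J * s) (J * s + s)).powersetCard k).card * (k - 1) < WJ.card := by
      rwa [Finset.card_powersetCard, Nat.card_Ico, Nat.add_sub_cancel_left]
    obtain ⟨S, hS, hSfib⟩ :=
      Finset.exists_lt_card_fiber_of_mul_lt_card_of_maps_to hmaps hcard
    set B := WJ.filter (fun b => pick b = S) with hB
    have hBk : k ≤ B.card := by omega
    have hSk : S.card = k := (Finset.mem_powersetCard.1 hS).2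
    have hinj : Set.InjOn Prod.fst (B : Set (ℕ × ℕ)) := by
      intro a ha b hb hab
      have ha2 : a.2 = J := (Finset.mem_filter.1 (Finset.mem_filter.1 ha).1).2
      have hb2 : b.2 = J := (Finset.mem_filter.1 (Finset.mem_filter.1 hb).1).2
      exact Prod.ext hab (ha2.trans hb2.symm)
    have hRcard : k ≤ (B.image Prod.fst).card := by
      rwa [Finset.card_image_of_injOn hinj]
    obtain ⟨R, hRsub, hRk⟩ := Finset.exists_subset_card_eq hRcard
    set rio := R.orderIsoOfFin hRk with hrio
    set yio := S.orderIsoOfFin hSk with hyio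
    have hblock : ∀ i : Fin k, ((rio i : ℕ), J) ∈ B := by
      intro i
      have : (rio i : ℕ) ∈ B.image Prod.fst := hRsub (rio i).2
      obtain ⟨b, hb, hb1⟩ := Finset.mem_image.1 this
      have hb2 : b.2 = J := (Finset.mem_filter.1 (Finset.mem_filter.1 hb).1).2
      have : b = ((rio i : ℕ), J) := Prod.ext hb1 hb2
      rwa [← this]
    have hpt : ∀ i : Fin k, ∃ p : ℕ × ℕ, p ∈ M ∧ p.1 / s = (rio i : ℕ) ∧
        p.2 = (yio (q i) : ℕ) := by
      intro i
      have hbB := hblock i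
      have hbW : ((rio i : ℕ), J) ∈ mWide s k M :=
        (Finset.mem_filter.1 (Finset.mem_filter.1 hbB).1).1
      have hpS : pick ((rio i : ℕ), J) = S := (Finset.mem_filter.1 hbB).2
      have hySmem : (yio (q i) : ℕ) ∈ (mfiber s M ((rio i : ℕ), J)).image Prod.snd := by
        apply hpick1 _ hbW
        rw [hpS]
        exact (yio (q i)).2
      obtain ⟨p, hp, hp2⟩ := Finset.mem_image.1 hySmem
      have hpf := Finset.mem_filter.1 hp
      exact ⟨p, hpf.1, congrArg Prod.fst hpf.2, hp2⟩
    choose pt hptM hpt1 hpt2 using hpt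
    apply havoid
    refine ⟨fun i => (pt i).1, fun j => (yio j : ℕ), ?_, ?_, ?_⟩
    · intro a b hab
      apply nat_lt_of_div_lt (s := s)
      rw [hpt1, hpt1]
      exact_mod_cast rio.strictMono hab
    · intro a b hab
      exact_mod_cast yio.strictMono hab
    · intro i
      have h := hptM i
      rw [show pt i = ((pt i).1, (pt i).2) from rfl, hpt2 i] at h
      exact h
  calc ∑ J ∈ Finset.range t, ((mWide s k M).filter (fun b => b.2 = J)).card
      ≤ ∑ J ∈ Finset.range t, (s.choose k) * (k - 1) := Finset.sum_le_sum key
    _ = t * ((s.choose k) * (k - 1)) := by rw [Finset.sum_const, Finset.card_range, smul_eq_mul]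

lemma mcontract_swap (s : ℕ) (M : Finset (ℕ × ℕ)) :
    mcontract s (M.image Prod.swap) = (mcontract s M).image Prod.swap := by
  unfold mcontract
  rw [Finset.image_image, Finset.image_image]
  rfl

lemma mfiber_swap (s : ℕ) (M : Finset (ℕ × ℕ)) (b : ℕ × ℕ) :
    mfiber s (M.image Prod.swap) b.swap = (mfiber s M b).image Prod.swap := by
  unfold mfiber
  rw [Finset.filter_image]
  congr 1
  apply Finset.filter_congr
  intro p _
  simp only [Prod.swap]
  constructor
  · intro h
    have h1 := congrArg Prod.fst h
    have h2 := congrArg Prod.snd h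
    simp at h1 h2
    exact Prod.ext (by simpa using h2) (by simpa using h1)
  · intro h
    have h1 := congrArg Prod.fst h
    have h2 := congrArg Prod.snd h
    simp at h1 h2
    exact Prod.ext (by simpa using h2) (by simpa using h1)

lemma tall_card_le {k s t : ℕ} {M : Finset (ℕ × ℕ)} {q : Equiv.Perm (Fin k)}
    (hs : 1 ≤ s) (hk : 1 ≤ k)
    (hM : ∀ p ∈ M, p.1 < s * t) (havoid : ¬ MContains M q) :
    (mTall s k M).card ≤ t * ((s.choose k) * (k - 1)) := by
  have havoid' : ¬ MContains (M.image Prod.swap) q⁻¹ := mavoids_swap havoid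
  have hM' : ∀ p ∈ M.image Prod.swap, p.2 < s * t := by
    intro p hp
    obtain ⟨r, hr, rfl⟩ := Finset.mem_image.1 hp
    exact hM r hr
  have hw := wide_card_le hs hk hM' havoid'
  refine le_trans ?_ hw
  apply Finset.card_le_card_of_injOn Prod.swap
  · intro b hb
    have hb1 : b ∈ mcontract s M := (Finset.mem_filter.1 hb).1
    have hb2 : k ≤ ((mfiber s M b).image Prod.fst).card := (Finset.mem_filter.1 hb).2
    apply Finset.mem_filter.2
    constructor
    · rw [show (M.image Prod.swap).image (fun p => (p.1 / s, p.2 / s))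
            = mcontract s (M.image Prod.swap) from rfl, mcontract_swap]
      exact Finset.mem_image_of_mem _ hb1
    · rw [mfiber_swap, Finset.image_image]
      have : (Prod.snd ∘ Prod.swap : ℕ × ℕ → ℕ) = Prod.fst := rfl
      rw [this]
      exact hb2
  · intro a _ b _ hab
    exact Prod.swap_injective hab

lemma fiber_card_le_mul {s : ℕ} {M : Finset (ℕ × ℕ)} (b : ℕ × ℕ) :
    (mfiber s M b).card ≤
      ((mfiber s M b).image Prod.fst).card * ((mfiber s M b).image Prod.snd).card :=
  le_trans (Finset.card_le_card Finset.subset_product) (le_of_eq (Finset.card_product _ _))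

lemma mt_arith' {S E c j : ℕ} (hS : 2*(j*j) + 2 ≤ S) (hEc : E ≤ c) (hc : c = S + E) :
    2*(c*(j*j) + E) ≤ S*c :=
  calc 2*(c*(j*j)+E) = c*(2*(j*j)) + 2*E := by ring
    _ ≤ c*(2*(j*j)) + 2*c := Nat.add_le_add_left (Nat.mul_le_mul_left 2 hEc) _
    _ = c*(2*(j*j)+2) := by ring
    _ ≤ c*S := Nat.mul_le_mul_left c hS
    _ = S*c := mul_comm _ _

lemma sq_ineq (k : ℕ) (hk : 1 ≤ k) : 2*((k-1)*(k-1)) + 2 ≤ 2*k*k := by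
  obtain ⟨j, rfl⟩ : ∃ j, k = j + 1 := ⟨k-1, (Nat.succ_pred_eq_of_pos hk).symm⟩
  simp only [Nat.add_sub_cancel]
  nlinarith [Nat.zero_le j]

lemma two_le_sq (k : ℕ) (hk : 1 ≤ k) : 2 ≤ 2*k*k := by
  have h := sq_ineq k hk
  omega

theorem mt_main {k : ℕ} (q : Equiv.Perm (Fin k)) (hk : 1 ≤ k) :
    ∃ c : ℕ, 1 ≤ c ∧ ∀ n : ℕ, ∀ M : Finset (ℕ × ℕ),
      (∀ p ∈ M, p.1 < n ∧ p.2 < n) → ¬ MContains M q → M.card ≤ c * n := by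
  classical
  set s := 2 * k * k with hs_def
  have hs2 : 2 ≤ s := two_le_sq k hk
  have hs1 : 1 ≤ s := by omega
  set C := s.choose k with hC_def
  set D := 2 * (C * (k-1)) * (s * s) with hD_def
  set c := s + D with hc_def
  have hc1 : 1 ≤ c := by omega
  refine ⟨c, hc1, ?_⟩
  intro n
  induction n using Nat.strong_induction_on with
  | _ n IH =>
    intro M hMpts havoid
    by_cases hn : n < s
    · have h1 : M ⊆ Finset.range n ×ˢ Finset.range n := fun p hp =>
        Finset.mem_product.2 ⟨Finset.mem_range.2 (hMpts p hp).1,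
          Finset.mem_range.2 (hMpts p hp).2⟩
      have h2 := Finset.card_le_card h1
      rw [Finset.card_product, Finset.card_range] at h2
      calc M.card ≤ n * n := h2
        _ ≤ s * n := Nat.mul_le_mul_right n (le_of_lt hn)
        _ ≤ c * n := Nat.mul_le_mul_right n (by omega)
    · push_neg at hn
      set t := (n + s - 1) / s with ht_def
      have hmod := Nat.div_add_mod (n + s - 1) s
      have hmodlt : (n + s - 1) % s < s := Nat.mod_lt _ hs1
      rw [← ht_def] at hmod
      obtain ⟨X, hX⟩ : ∃ X, s * t = X := ⟨_, rfl⟩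
      rw [hX] at hmod
      have hnX : n ≤ X := by omega
      have hX2n : X < 2 * n := by omega
      have htn : t < n := by
        have h2n : 2 * n ≤ s * n := Nat.mul_le_mul_right n hs2
        have hstn : s * t < s * n := by rw [hX]; omega
        exact Nat.lt_of_mul_lt_mul_left hstn
      have hMpts' : ∀ p ∈ M, p.1 < s * t ∧ p.2 < s * t := by
        intro p hp
        rw [hX]
        exact ⟨lt_of_lt_of_le (hMpts p hp).1 hnX, lt_of_lt_of_le (hMpts p hp).2 hnX⟩
      have hM'avoid : ¬ MContains (mcontract s M) q := fun h => havoid (mcontains_of_contract h)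
      have hM'pts : ∀ b ∈ mcontract s M, b.1 < t ∧ b.2 < t := by
        intro b hb
        obtain ⟨p, hp, rfl⟩ := Finset.mem_image.1 hb
        exact ⟨Nat.div_lt_of_lt_mul (hMpts' p hp).1, Nat.div_lt_of_lt_mul (hMpts' p hp).2⟩
      have hM'card : (mcontract s M).card ≤ c * t := IH t htn _ hM'pts hM'avoid
      have hwide := wide_card_le (t := t) hs1 hk (fun p hp => (hMpts' p hp).2) havoid
      have htall := tall_card_le (t := t) hs1 hk (fun p hp => (hMpts' p hp).1) havoid
      have hsum : M.card = ∑ b ∈ mcontract s M, (mfiber s M b).card := by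
        unfold mcontract mfiber
        exact Finset.card_eq_sum_card_image _ M
      have hpw : ∀ b ∈ mcontract s M, (mfiber s M b).card ≤
          (k-1)*(k-1) + (if b ∈ mWide s k M ∪ mTall s k M then s*s else 0) := by
        intro b hb
        by_cases hbU : b ∈ mWide s k M ∪ mTall s k M
        · rw [if_pos hbU]
          have h1 : ((mfiber s M b).image Prod.fst).card ≤ s := by
            have := Finset.card_le_card (mfiber_fst_subset (M := M) (b := b) hs1)
            rwa [Nat.card_Ico, Nat.add_sub_cancel_left] at this
          have h2 : ((mfiber s M b).image Prod.snd).card ≤ s := by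
            have := Finset.card_le_card (mfiber_snd_subset (M := M) (b := b) hs1)
            rwa [Nat.card_Ico, Nat.add_sub_cancel_left] at this
          exact le_trans (fiber_card_le_mul b)
            (le_trans (Nat.mul_le_mul h1 h2) (Nat.le_add_left _ _))
        · rw [if_neg hbU, Nat.add_zero]
          have hnw : ¬ k ≤ ((mfiber s M b).image Prod.snd).card := by
            intro h
            exact hbU (Finset.mem_union_left _ (Finset.mem_filter.2 ⟨hb, h⟩))
          have hnt : ¬ k ≤ ((mfiber s M b).image Prod.fst).card := by
            intro h
            exact hbU (Finset.mem_union_right _ (Finset.mem_filter.2 ⟨hb, h⟩))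
          exact le_trans (fiber_card_le_mul b)
            (Nat.mul_le_mul (by omega) (by omega))
      have hS' : 2*((k-1)*(k-1)) + 2 ≤ s := by rw [hs_def]; exact sq_ineq k hk
      have hkey : 2 * (c * ((k-1)*(k-1)) + D) ≤ s * c :=
        mt_arith' hS' (by omega) hc_def
      calc M.card = ∑ b ∈ mcontract s M, (mfiber s M b).card := hsum
        _ ≤ ∑ b ∈ mcontract s M,
            ((k-1)*(k-1) + (if b ∈ mWide s k M ∪ mTall s k M then s*s else 0)) :=
          Finset.sum_le_sum hpw
        _ = (mcontract s M).card * ((k-1)*(k-1)) +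
            ∑ b ∈ mcontract s M, (if b ∈ mWide s k M ∪ mTall s k M then s*s else 0) := by
          rw [Finset.sum_add_distrib, Finset.sum_const, smul_eq_mul]
        _ = (mcontract s M).card * ((k-1)*(k-1)) +
            (mcontract s M ∩ (mWide s k M ∪ mTall s k M)).card * (s*s) := by
          rw [Finset.sum_ite_mem, Finset.sum_const, smul_eq_mul]
        _ ≤ (c * t) * ((k-1)*(k-1)) +
            (t * (C * (k-1)) + t * (C * (k-1))) * (s*s) := by
          apply Nat.add_le_add
          · exact Nat.mul_le_mul_right _ hM'card
          · apply Nat.mul_le_mul_right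
            calc (mcontract s M ∩ (mWide s k M ∪ mTall s k M)).card
                ≤ (mWide s k M ∪ mTall s k M).card :=
                  Finset.card_le_card Finset.inter_subset_right
              _ ≤ (mWide s k M).card + (mTall s k M).card := Finset.card_union_le _ _
              _ ≤ t * (C * (k-1)) + t * (C * (k-1)) := Nat.add_le_add hwide htall
        _ = t * (c * ((k-1)*(k-1)) + D) := by rw [hD_def]; ring
        _ ≤ c * n := by
          refine Nat.le_of_mul_le_mul_left ?_ (show 0 < s by omega)
          calc s * (t * (c * ((k-1)*(k-1)) + D)) = (s * t) * (c * ((k-1)*(k-1)) + D) := by ring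
            _ = X * (c * ((k-1)*(k-1)) + D) := by rw [hX]
            _ ≤ (2 * n) * (c * ((k-1)*(k-1)) + D) := Nat.mul_le_mul_right _ (le_of_lt hX2n)
            _ = n * (2 * (c * ((k-1)*(k-1)) + D)) := by ring
            _ ≤ n * (s * c) := Nat.mul_le_mul_left _ hkey
            _ = s * (c * n) := by ring

lemma finset_card_pi {α : Type*} [DecidableEq α] {β : α → Type*} (s : Finset α)
    (t : ∀ a, Finset (β a)) : (s.pi t).card = ∏ a ∈ s, (t a).card := by
  classical
  induction s using Finset.cons_induction with
  | empty => simp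
  | cons a s ha ih =>
    rw [Finset.prod_cons, ← ih, Finset.cons_eq_insert, Finset.pi_insert ha]
    have hdisj : ∀ u ∈ t a, ∀ v ∈ t a, u ≠ v →
        Disjoint (Finset.image (Finset.Pi.cons s a u) (s.pi t))
          (Finset.image (Finset.Pi.cons s a v) (s.pi t)) := by
      intro u _ v _ huv
      rw [Finset.disjoint_left]
      intro g hg hg'
      obtain ⟨f, _, rfl⟩ := Finset.mem_image.1 hg
      obtain ⟨f', _, he⟩ := Finset.mem_image.1 hg'
      apply huv
      rw [← Finset.Pi.cons_same s a u f (Finset.mem_insert_self a s),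
        ← he, Finset.Pi.cons_same]
    rw [Finset.card_biUnion hdisj]
    have hkey : ∀ u ∈ t a, (Finset.image (Finset.Pi.cons s a u) (s.pi t)).card = (s.pi t).card :=
      fun u _ => Finset.card_image_of_injective _ (Finset.Pi.cons_injective ha)
    rw [Finset.sum_congr rfl hkey, Finset.sum_const, smul_eq_mul]

noncomputable def avSet {k : ℕ} (q : Equiv.Perm (Fin k)) (n : ℕ) : Finset (Finset (ℕ × ℕ)) :=
  @Finset.filter _ (fun M => ¬ MContains M q) (Classical.decPred _)
    ((Finset.range n ×ˢ Finset.range n).powerset)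

lemma mem_avSet {k : ℕ} {q : Equiv.Perm (Fin k)} {n : ℕ} {M : Finset (ℕ × ℕ)} :
    M ∈ avSet q n ↔ M ⊆ Finset.range n ×ˢ Finset.range n ∧ ¬ MContains M q := by
  rw [avSet, @Finset.mem_filter _ _ (Classical.decPred _), Finset.mem_powerset]

lemma avSet_mono {k : ℕ} {q : Equiv.Perm (Fin k)} {n m : ℕ} (h : n ≤ m) :
    avSet q n ⊆ avSet q m := by
  intro M hM
  rw [mem_avSet] at hM ⊢
  refine ⟨hM.1.trans ?_, hM.2⟩
  exact Finset.product_subset_product (Finset.range_subset_range.2 h) (Finset.range_subset_range.2 h)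

lemma avSet_one_card {k : ℕ} (q : Equiv.Perm (Fin k)) : (avSet q 1).card ≤ 2 := by
  have h : avSet q 1 ⊆ (Finset.range 1 ×ˢ Finset.range 1).powerset :=
    fun M hM => Finset.mem_powerset.2 (mem_avSet.1 hM).1
  have := Finset.card_le_card h
  rwa [Finset.card_powerset, Finset.card_product, Finset.card_range] at this

def blk (b : ℕ × ℕ) : Finset (ℕ × ℕ) :=
  (Finset.Ico (2*b.1) (2*b.1+2)) ×ˢ (Finset.Ico (2*b.2) (2*b.2+2))

lemma mfiber_two_subset_blk (M : Finset (ℕ × ℕ)) (b : ℕ × ℕ) :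
    mfiber 2 M b ⊆ blk b := by
  intro p hp
  have h := (Finset.mem_filter.1 hp).2
  have h1 : p.1 / 2 = b.1 := congrArg Prod.fst h
  have h2 : p.2 / 2 = b.2 := congrArg Prod.snd h
  rw [blk, Finset.mem_product, Finset.mem_Ico, Finset.mem_Ico]
  omega

lemma mfiber_eq_of_mem {M : Finset (ℕ × ℕ)} {p : ℕ × ℕ} (hp : p ∈ M) (s : ℕ) :
    p ∈ mfiber s M (p.1 / s, p.2 / s) :=
  Finset.mem_filter.2 ⟨hp, rfl⟩

lemma klazar_rec {k : ℕ} {q : Equiv.Perm (Fin k)} {c n : ℕ}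
    (hc : ∀ M : Finset (ℕ × ℕ), (∀ p ∈ M, p.1 < n ∧ p.2 < n) → ¬ MContains M q → M.card ≤ c * n) :
    (avSet q (2*n)).card ≤ 16 ^ (c * n) * (avSet q n).card := by
  classical
  have hmaps : ∀ M ∈ avSet q (2*n), mcontract 2 M ∈ avSet q n := by
    intro M hM
    rw [mem_avSet] at hM ⊢
    constructor
    · intro b hb
      obtain ⟨p, hp, rfl⟩ := Finset.mem_image.1 hb
      have := hM.1 hp
      rw [Finset.mem_product, Finset.mem_range, Finset.mem_range] at this ⊢
      omega
    · intro h
      exact hM.2 (mcontains_of_contract h)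
  apply Finset.card_le_mul_card_image_of_maps_to hmaps
  intro M' hM'
  -- each fiber injects into the pi-set of per-block subsets
  have hM'card : M'.card ≤ c * n := by
    rw [mem_avSet] at hM'
    apply hc M' _ hM'.2
    intro p hp
    have := hM'.1 hp
    rw [Finset.mem_product, Finset.mem_range, Finset.mem_range] at this
    exact this
  set F := {M ∈ avSet q (2*n) | mcontract 2 M = M'} with hF
  have hinj : ∀ M ∈ F, ∀ N ∈ F, (∀ b ∈ M', mfiber 2 M b = mfiber 2 N b) → M = N := by
    intro M hM N hN hfib
    have hMc : mcontract 2 M = M' := (Finset.mem_filter.1 hM).2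
    have hNc : mcontract 2 N = M' := (Finset.mem_filter.1 hN).2
    ext p
    constructor
    · intro hp
      have hb : (p.1/2, p.2/2) ∈ M' := by
        rw [← hMc]; exact Finset.mem_image_of_mem _ hp
      have := hfib _ hb ▸ mfiber_eq_of_mem hp 2
      exact (Finset.mem_filter.1 this).1
    · intro hp
      have hb : (p.1/2, p.2/2) ∈ M' := by
        rw [← hNc]; exact Finset.mem_image_of_mem _ hp
      have := (hfib _ hb).symm ▸ mfiber_eq_of_mem hp 2
      exact (Finset.mem_filter.1 this).1
  have hcard : F.card ≤ (M'.pi (fun b => (blk b).powerset)).card := by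
    apply Finset.card_le_card_of_injOn (fun M => fun b _ => mfiber 2 M b)
    · intro M _
      rw [Finset.mem_coe, Finset.mem_pi]
      intro b _
      exact Finset.mem_powerset.2 (mfiber_two_subset_blk M b)
    · intro M hM N hN h
      refine hinj M hM N hN (fun b hb => ?_)
      exact congrFun (congrFun h b) hb
  refine le_trans hcard ?_
  rw [finset_card_pi]
  have : ∀ b ∈ M', ((blk b).powerset).card = 16 := by
    intro b _
    rw [Finset.card_powerset, blk, Finset.card_product, Nat.card_Ico, Nat.card_Ico]
    norm_num
  rw [Finset.prod_congr rfl this, Finset.prod_const]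
  exact Nat.pow_le_pow_right (by norm_num) hM'card

lemma avSet_pow_card {k : ℕ} {q : Equiv.Perm (Fin k)} {c : ℕ}
    (hc : ∀ n : ℕ, ∀ M : Finset (ℕ × ℕ),
      (∀ p ∈ M, p.1 < n ∧ p.2 < n) → ¬ MContains M q → M.card ≤ c * n) :
    ∀ m : ℕ, (avSet q (2^m)).card ≤ 2 * 16 ^ (c * 2^m) := by
  intro m
  induction m with
  | zero =>
    have h1 := avSet_one_card q
    have h2 : 1 ≤ 16 ^ (c * 2^0) := Nat.one_le_pow _ _ (by norm_num)
    calc (avSet q (2^0)).card ≤ 2 := by simpa using h1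
      _ = 2 * 1 := (mul_one 2).symm
      _ ≤ 2 * 16 ^ (c * 2^0) := Nat.mul_le_mul_left 2 h2
  | succ m ih =>
    have h2 : (2:ℕ)^(m+1) = 2 * 2^m := by ring
    rw [h2]
    calc (avSet q (2 * 2^m)).card ≤ 16 ^ (c * 2^m) * (avSet q (2^m)).card :=
        klazar_rec (fun M h1 h2 => hc (2^m) M h1 h2)
      _ ≤ 16 ^ (c * 2^m) * (2 * 16 ^ (c * 2^m)) := Nat.mul_le_mul_left _ ih
      _ = 2 * 16 ^ (c * (2 * 2^m)) := by
        have h3 : c * (2 * 2^m) = c * 2^m + c * 2^m := by ring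
        rw [h3, pow_add]
        ring

lemma avSet_card_le {k : ℕ} {q : Equiv.Perm (Fin k)} {c : ℕ}
    (hc : ∀ n : ℕ, ∀ M : Finset (ℕ × ℕ),
      (∀ p ∈ M, p.1 < n ∧ p.2 < n) → ¬ MContains M q → M.card ≤ c * n) :
    ∀ n : ℕ, 1 ≤ n → (avSet q n).card ≤ 2 * (16 ^ (2 * c)) ^ n := by
  have hpow : ∀ a b : ℕ, a ≤ b → (16:ℕ) ^ a ≤ 16 ^ b :=
    fun a b h => Nat.pow_le_pow_right (by norm_num) h
  intro n hn
  have hpe : ∀ j : ℕ, (16:ℕ) ^ (c * (2 * j)) = (16 ^ (2 * c)) ^ j := by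
    intro j
    rw [← pow_mul]
    ring_nf
  rcases eq_or_lt_of_le hn with h1 | h2
  · rw [← h1]
    have := avSet_one_card q
    have h2 : 1 ≤ (16 ^ (2*c) : ℕ) ^ 1 := Nat.one_le_pow _ _ (Nat.pow_pos (by norm_num))
    omega
  · set m := Nat.clog 2 n with hm
    have hnm : n ≤ 2 ^ m := Nat.le_pow_clog one_lt_two n
    have hm1 : 2 ^ m ≤ 2 * n := by
      rcases Nat.eq_zero_or_pos m with h0 | hpos
      · rw [h0]; omega
      · have := Nat.pow_pred_clog_lt_self one_lt_two h2
        rw [← hm] at this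
        have hlt : 2 ^ (m - 1) < n := this
        have he : 2 ^ m = 2 * 2 ^ (m - 1) := by
          rw [← pow_succ']
          congr 1
          omega
        omega
    calc (avSet q n).card ≤ (avSet q (2^m)).card := Finset.card_le_card (avSet_mono hnm)
      _ ≤ 2 * 16 ^ (c * 2^m) := avSet_pow_card hc m
      _ ≤ 2 * 16 ^ (c * (2*n)) := by
        have := hpow (c * 2^m) (c * (2*n)) (Nat.mul_le_mul_left c hm1)
        omega
      _ = 2 * (16 ^ (2*c)) ^ n := by rw [hpe n]

/-- graph of a permutation as a point set -/
def pgraph {n : ℕ} (p : Equiv.Perm (Fin n)) : Finset (ℕ × ℕ) :=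
  (Finset.univ : Finset (Fin n)).image (fun i : Fin n => ((i : ℕ), (p i : ℕ)))

lemma mem_pgraph {n : ℕ} {p : Equiv.Perm (Fin n)} {a : ℕ × ℕ} :
    a ∈ pgraph p ↔ ∃ i : Fin n, ((i : ℕ), (p i : ℕ)) = a := by
  rw [pgraph]
  simp [Finset.mem_image]

lemma mcontains_pgraph_iff {n k : ℕ} {p : Equiv.Perm (Fin n)} {q : Equiv.Perm (Fin k)} :
    MContains (pgraph p) q ↔ PatternContains p q := by
  constructor
  · rintro ⟨x, y, hx, hy, hm⟩
    have hmem : ∀ i : Fin k, ∃ a : Fin n, (a : ℕ) = x i ∧ (p a : ℕ) = y (q i) := by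
      intro i
      obtain ⟨a, he⟩ := mem_pgraph.1 (hm i)
      exact ⟨a, congrArg Prod.fst he, congrArg Prod.snd he⟩
    choose g hg1 hg2 using hmem
    refine ⟨g, ?_, ?_⟩
    · intro a b hab
      have : (g a : ℕ) < (g b : ℕ) := by rw [hg1, hg1]; exact hx hab
      exact this
    · intro r s
      constructor
      · intro h
        have : y (q r) < y (q s) := hy h
        rw [← hg2, ← hg2] at this
        exact this
      · intro h
        have h2 : y (q r) < y (q s) := by rw [← hg2, ← hg2]; exact h
        exact hy.lt_iff_lt.1 h2
  · rintro ⟨f, hf, hp⟩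
    refine ⟨fun i => (f i : ℕ), fun j => (p (f (q.symm j)) : ℕ), ?_, ?_, ?_⟩
    · intro a b hab
      exact_mod_cast hf hab
    · intro a b hab
      have : q (q.symm a) < q (q.symm b) := by
        rw [Equiv.apply_symm_apply, Equiv.apply_symm_apply]; exact hab
      exact_mod_cast (hp _ _).1 this
    · intro i
      simp only [Equiv.symm_apply_apply]
      exact mem_pgraph.2 ⟨f i, rfl⟩

lemma pgraph_injective {n : ℕ} : Function.Injective (pgraph (n := n)) := by
  intro p1 p2 h
  ext i
  have h1 : ((i : ℕ), (p1 i : ℕ)) ∈ pgraph p2 := by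
    rw [← h]
    exact mem_pgraph.2 ⟨i, rfl⟩
  obtain ⟨a, he⟩ := mem_pgraph.1 h1
  have ha1 : (a : ℕ) = (i : ℕ) := congrArg Prod.fst he
  have ha2 : (p2 a : ℕ) = (p1 i : ℕ) := congrArg Prod.snd he
  have : a = i := Fin.ext ha1
  rw [this] at ha2
  exact ha2.symm

lemma pgraph_mem_avSet {n k : ℕ} {p : Equiv.Perm (Fin n)} {q : Equiv.Perm (Fin k)}
    (h : PatternAvoids p q) : pgraph p ∈ avSet q n := by
  rw [mem_avSet]
  constructor
  · intro pt hpt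
    obtain ⟨a, rfl⟩ := mem_pgraph.1 hpt
    exact Finset.mem_product.2 ⟨Finset.mem_range.2 a.2, Finset.mem_range.2 (p a).2⟩
  · intro hc
    exact h (mcontains_pgraph_iff.1 hc)

lemma savQ_le_avSet_card {n k : ℕ} (q : Equiv.Perm (Fin k)) :
    SavQ q n ≤ (avSet q n).card := by
  have hinj : Function.Injective
      (fun p : {p : Equiv.Perm (Fin n) // StronglyAvoids p q} =>
        (⟨pgraph p.1, pgraph_mem_avSet p.2.1⟩ : {M // M ∈ avSet q n})) := by
    intro p1 p2 h
    exact Subtype.ext (pgraph_injective (congrArg Subtype.val h))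
  have := Nat.card_le_card_of_injective _ hinj
  rwa [Nat.card_eq_fintype_card (α := {M // M ∈ avSet q n}), Fintype.card_coe] at this

/-- exponential upper bound on the number of strong avoiders -/
lemma savQ_exp_bound {k : ℕ} (q : Equiv.Perm (Fin k)) (hk : 1 ≤ k) :
    ∃ b : ℕ, 1 ≤ b ∧ ∀ n : ℕ, 1 ≤ n → SavQ q n ≤ 2 * b ^ n := by
  obtain ⟨c, _, hc⟩ := mt_main q hk
  refine ⟨16 ^ (2*c), Nat.one_le_pow _ _ (by norm_num), fun n hn => ?_⟩
  exact le_trans (savQ_le_avSet_card q) (avSet_card_le hc n hn)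

section DSum
variable {n m : ℕ}

def dsum (p : Equiv.Perm (Fin n)) (r : Equiv.Perm (Fin m)) : Equiv.Perm (Fin (n+m)) :=
  finSumFinEquiv.permCongr (Equiv.sumCongr p r)

lemma dsum_mul (p p' : Equiv.Perm (Fin n)) (r r' : Equiv.Perm (Fin m)) :
    dsum (p * p') (r * r') = dsum p r * dsum p' r' := by
  apply Equiv.ext
  intro x
  simp only [dsum, Equiv.permCongr_apply, Equiv.Perm.mul_apply, Equiv.symm_apply_apply]
  rcases h : finSumFinEquiv.symm x with a | a <;>
    simp [Equiv.sumCongr_apply, Equiv.Perm.mul_apply]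

lemma dsum_apply_lt (p : Equiv.Perm (Fin n)) (r : Equiv.Perm (Fin m))
    {i : Fin (n+m)} (h : (i : ℕ) < n) :
    (dsum p r i : ℕ) = (p ⟨(i : ℕ), h⟩ : ℕ) := by
  have hsymm : finSumFinEquiv.symm i = Sum.inl ⟨(i : ℕ), h⟩ := by
    rw [Equiv.symm_apply_eq, finSumFinEquiv_apply_left]
    exact Fin.ext rfl
  rw [dsum, Equiv.permCongr_apply, hsymm]
  simp

lemma dsum_apply_ge (p : Equiv.Perm (Fin n)) (r : Equiv.Perm (Fin m))
    {i : Fin (n+m)} (h : n ≤ (i : ℕ)) :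
    (dsum p r i : ℕ) = n + (r ⟨(i : ℕ) - n, by have := i.2; omega⟩ : ℕ) := by
  have hsymm : finSumFinEquiv.symm i = Sum.inr ⟨(i : ℕ) - n, by have := i.2; omega⟩ := by
    rw [Equiv.symm_apply_eq, finSumFinEquiv_apply_right]
    apply Fin.ext
    simp
    omega
  rw [dsum, Equiv.permCongr_apply, hsymm]
  simp

lemma dsum_avoids {k : ℕ} {q : Equiv.Perm (Fin k)} (hq : Indecomposable q)
    {p : Equiv.Perm (Fin n)} {r : Equiv.Perm (Fin m)}
    (hp : PatternAvoids p q) (hr : PatternAvoids r q) : PatternAvoids (dsum p r) q := by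
  classical
  rintro ⟨f, hf, hiff⟩
  set S := Finset.univ.filter (fun i : Fin k => (f i : ℕ) < n) with hSdef
  set j := S.card with hjdef
  have hdown : ∀ a b : Fin k, a ≤ b → b ∈ S → a ∈ S := by
    intro a b hab hb
    rcases eq_or_lt_of_le hab with rfl | hlt
    · exact hb
    · have : (f a : ℕ) < (f b : ℕ) := hf hlt
      have hb' : (f b : ℕ) < n := (Finset.mem_filter.1 hb).2
      exact Finset.mem_filter.2 ⟨Finset.mem_univ _, by omega⟩
  have hjS : ∀ a : Fin k, (a : ℕ) < j → a ∈ S := by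
    intro a ha
    by_contra hc
    have hsub : S ⊆ Finset.Iio a := by
      intro b hb
      rw [Finset.mem_Iio]
      by_contra hbc
      exact hc (hdown a b (not_lt.1 hbc) hb)
    have := Finset.card_le_card hsub
    rw [Fin.card_Iio] at this
    omega
  have hjS' : ∀ b : Fin k, j ≤ (b : ℕ) → b ∉ S := by
    intro b hb hbS
    have hsub : Finset.Iic b ⊆ S := by
      intro a ha
      exact hdown a b (Finset.mem_Iic.1 ha) hbS
    have := Finset.card_le_card hsub
    rw [Fin.card_Iic] at this
    omega
  have hjk : j ≤ k := by
    have := Finset.card_le_card (Finset.subset_univ S)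
    rwa [Finset.card_univ, Fintype.card_fin] at this
  rcases Nat.eq_zero_or_pos j with h0 | hpos
  · -- all f i ≥ n : pattern inside r
    have hge : ∀ i : Fin k, n ≤ (f i : ℕ) := by
      intro i
      by_contra hc
      exact hjS' i (by omega) (Finset.mem_filter.2 ⟨Finset.mem_univ _, by omega⟩)
    have hlt : ∀ i : Fin k, (f i : ℕ) - n < m := by
      intro i
      have h1 := (f i).2
      have h2 := hge i
      omega
    refine hr ⟨fun i => ⟨(f i : ℕ) - n, hlt i⟩, ?_, ?_⟩
    · intro a b hab
      show (⟨(f a : ℕ) - n, hlt a⟩ : Fin m) < ⟨(f b : ℕ) - n, hlt b⟩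
      rw [Fin.mk_lt_mk]
      have h1 : (f a : ℕ) < (f b : ℕ) := hf hab
      have h2 := hge a
      omega
    · intro a b
      rw [hiff a b]
      show _ ↔ r ⟨(f a : ℕ) - n, hlt a⟩ < r ⟨(f b : ℕ) - n, hlt b⟩
      rw [Fin.lt_def, Fin.lt_def, dsum_apply_ge p r (hge a), dsum_apply_ge p r (hge b)]
      exact Nat.add_lt_add_iff_left
  · rcases eq_or_lt_of_le hjk with hk' | hltk
    · -- all f i < n : pattern inside p
      have hlt : ∀ i : Fin k, (f i : ℕ) < n := by
        intro i
        have : i ∈ S := hjS i (by rw [hk']; exact i.2)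
        exact (Finset.mem_filter.1 this).2
      refine hp ⟨fun i => ⟨(f i : ℕ), hlt i⟩, ?_, ?_⟩
      · intro a b hab
        show (⟨(f a : ℕ), hlt a⟩ : Fin n) < ⟨(f b : ℕ), hlt b⟩
        rw [Fin.mk_lt_mk]
        exact hf hab
      · intro a b
        rw [hiff a b]
        show _ ↔ p ⟨(f a : ℕ), hlt a⟩ < p ⟨(f b : ℕ), hlt b⟩
        rw [Fin.lt_def, Fin.lt_def, dsum_apply_lt p r (hlt a), dsum_apply_lt p r (hlt b)]
    · -- 1 ≤ j < k : contradicts indecomposability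
      refine hq ⟨j, hpos, hltk, ?_⟩
      intro a b ha hb
      have haS := hjS a ha
      have hfa : (f a : ℕ) < n := (Finset.mem_filter.1 haS).2
      have hfb : n ≤ (f b : ℕ) := by
        by_contra hc
        exact hjS' b hb (Finset.mem_filter.2 ⟨Finset.mem_univ _, by omega⟩)
      apply (hiff a b).2
      rw [Fin.lt_def, dsum_apply_lt p r hfa, dsum_apply_ge p r hfb]
      have := (p ⟨(f a : ℕ), hfa⟩).2
      omega

lemma dsum_injective2 {p p' : Equiv.Perm (Fin n)} {r r' : Equiv.Perm (Fin m)}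
    (h : dsum p r = dsum p' r') : p = p' ∧ r = r' := by
  constructor
  · apply Equiv.ext
    intro a
    have ha : ((Fin.castAdd m a : Fin (n+m)) : ℕ) < n := by simpa using a.2
    have h1 := dsum_apply_lt p r ha
    have h2 := dsum_apply_lt p' r' ha
    rw [h] at h1
    apply Fin.ext
    have he : (⟨((Fin.castAdd m a : Fin (n+m)) : ℕ), ha⟩ : Fin n) = a := Fin.ext (by simp)
    rw [he] at h1 h2
    omega
  · apply Equiv.ext
    intro a
    have ha : n ≤ ((Fin.natAdd n a : Fin (n+m)) : ℕ) := by simp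
    have h1 := dsum_apply_ge p r ha
    have h2 := dsum_apply_ge p' r' ha
    rw [h] at h1
    apply Fin.ext
    have he : (⟨((Fin.natAdd n a : Fin (n+m)) : ℕ) - n, by simp⟩ : Fin m) = a :=
      Fin.ext (by simp)
    rw [he] at h1 h2
    omega

lemma savQ_supermul {k : ℕ} {q : Equiv.Perm (Fin k)} (hq : Indecomposable q) (n m : ℕ) :
    SavQ q n * SavQ q m ≤ SavQ q (n + m) := by
  rw [SavQ, SavQ, SavQ, ← Nat.card_prod]
  apply Nat.card_le_card_of_injective
    (f := fun pr : ({p : Equiv.Perm (Fin n) // StronglyAvoids p q} ×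
        {r : Equiv.Perm (Fin m) // StronglyAvoids r q}) =>
      (⟨dsum pr.1.1 pr.2.1, ⟨dsum_avoids hq pr.1.2.1 pr.2.2.1, by
        rw [← dsum_mul]
        exact dsum_avoids hq pr.1.2.2 pr.2.2.2⟩⟩ :
        {s : Equiv.Perm (Fin (n+m)) // StronglyAvoids s q}))
  intro a b hab
  have h := dsum_injective2 (congrArg Subtype.val hab)
  exact Prod.ext (Subtype.ext h.1) (Subtype.ext h.2)

lemma avoids_one {k : ℕ} {q : Equiv.Perm (Fin k)} (hq : Indecomposable q) (hk : 2 ≤ k)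
    (n : ℕ) : PatternAvoids (1 : Equiv.Perm (Fin n)) q := by
  rintro ⟨f, hf, hiff⟩
  refine hq ⟨1, le_refl 1, by omega, ?_⟩
  intro a b ha hb
  apply (hiff a b).2
  simp only [Equiv.Perm.one_apply]
  exact hf (by rw [Fin.lt_def]; omega)

lemma savQ_pos {k : ℕ} {q : Equiv.Perm (Fin k)} (hq : Indecomposable q) (hk : 2 ≤ k)
    (n : ℕ) : 1 ≤ SavQ q n := by
  have hne : Nonempty {p : Equiv.Perm (Fin n) // StronglyAvoids p q} :=
    ⟨⟨1, ⟨avoids_one hq hk n, by rw [one_mul]; exact avoids_one hq hk n⟩⟩⟩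
  exact Nat.card_pos

end DSum

lemma contains_of_small {n k : ℕ} (p : Equiv.Perm (Fin n)) (q : Equiv.Perm (Fin k))
    (hk : k ≤ 1) (hn : 1 ≤ n) : PatternContains p q := by
  rcases Nat.eq_zero_or_pos k with h0 | h1
  · subst h0
    exact ⟨Fin.elim0, fun a => a.elim0, fun r => r.elim0⟩
  · have hk1 : k = 1 := by omega
    subst hk1
    refine ⟨fun _ => ⟨0, by omega⟩, ?_, ?_⟩
    · intro a b hab
      exact absurd (Subsingleton.elim a b) (ne_of_lt hab)
    · intro r s
      have h : r = s := Subsingleton.elim r s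
      subst h
      simp

lemma savQ_eq_zero_of_small {n k : ℕ} (q : Equiv.Perm (Fin k)) (hk : k ≤ 1) (hn : 1 ≤ n) :
    SavQ q n = 0 := by
  rw [SavQ]
  haveI : IsEmpty {p : Equiv.Perm (Fin n) // StronglyAvoids p q} :=
    ⟨fun x => x.2.1 (contains_of_small x.1 q hk hn)⟩
  exact Nat.card_of_isEmpty

open Filter

/-- For an indecomposable pattern q, the limit of (Sav_n(q))^{1/n} exists. -/
theorem savQ_growth_limit_exists {k : ℕ} (q : Equiv.Perm (Fin k))
    (hq : Indecomposable q) :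
    ∃ L : ℝ, Filter.Tendsto (fun n : ℕ => (SavQ q n : ℝ) ^ ((n : ℝ)⁻¹))
      Filter.atTop (nhds L) := by
  by_cases hk : 2 ≤ k
  · obtain ⟨b, hb1, hb⟩ := savQ_exp_bound q (by omega)
    have hpos : ∀ n, 1 ≤ SavQ q n := savQ_pos hq hk
    have hposR : ∀ n, (0:ℝ) < (SavQ q n : ℝ) := fun n => by
      have := hpos n
      exact_mod_cast Nat.lt_of_lt_of_le Nat.zero_lt_one this
    set u : ℕ → ℝ := fun n => - Real.log (SavQ q n) with hu
    have hsubadd : Subadditive u := by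
      intro a c
      have hmul := savQ_supermul hq a c
      have h1 : (SavQ q a : ℝ) * (SavQ q c : ℝ) ≤ (SavQ q (a+c) : ℝ) := by
        exact_mod_cast hmul
      have h2 : Real.log ((SavQ q a : ℝ) * (SavQ q c : ℝ)) ≤ Real.log (SavQ q (a+c)) :=
        Real.log_le_log (mul_pos (hposR a) (hposR c)) h1
      rw [Real.log_mul (ne_of_gt (hposR a)) (ne_of_gt (hposR c))] at h2
      simp only [hu]
      linarith
    have hbdd : BddBelow (Set.range fun n : ℕ => u n / n) := by
      refine ⟨-(Real.log (2*b)), ?_⟩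
      rintro x ⟨n, rfl⟩
      have hlog2b : 0 ≤ Real.log (2*(b:ℝ)) := by
        apply Real.log_nonneg
        have : (1:ℝ) ≤ (b:ℝ) := by exact_mod_cast hb1
        linarith
      rcases Nat.eq_zero_or_pos n with h0 | h1
      · subst h0
        simp only [Nat.cast_zero, div_zero]
        linarith
      · have hbound : SavQ q n ≤ (2*b)^n := by
          refine le_trans (hb n h1) ?_
          rw [mul_pow]
          have h2 : 2 ≤ 2^n := by
            calc (2:ℕ) = 2^1 := (pow_one 2).symm
              _ ≤ 2^n := Nat.pow_le_pow_right (by norm_num) h1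
          exact Nat.mul_le_mul_right _ h2
        have hboundR : (SavQ q n : ℝ) ≤ (2*(b:ℝ))^n := by
          have := hbound
          exact_mod_cast this
        have hlogle : Real.log (SavQ q n) ≤ n * Real.log (2*(b:ℝ)) := by
          rw [← Real.log_pow]
          exact Real.log_le_log (hposR n) hboundR
        have hnpos : (0:ℝ) < n := by exact_mod_cast h1
        simp only [hu]
        rw [neg_div, le_neg, neg_neg, div_le_iff₀ hnpos]
        linarith [hlogle]
    have hfek := hsubadd.tendsto_lim hbdd
    refine ⟨Real.exp (- hsubadd.lim), ?_⟩
    have htend : Tendsto (fun n : ℕ => Real.exp (-(u n / n))) atTop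
        (nhds (Real.exp (- hsubadd.lim))) :=
      (Real.continuous_exp.tendsto _).comp hfek.neg
    apply Filter.Tendsto.congr' _ htend
    filter_upwards [eventually_ge_atTop 1] with n hn
    rw [Real.rpow_def_of_pos (hposR n)]
    congr 1
    simp only [hu]
    rw [neg_div, neg_neg, div_eq_mul_inv]
  · refine ⟨0, ?_⟩
    apply Filter.Tendsto.congr' _ (tendsto_const_nhds (x := (0:ℝ)))
    filter_upwards [eventually_ge_atTop 1] with n hn
    rw [savQ_eq_zero_of_small q (by omega) hn, Nat.cast_zero, Real.zero_rpow]
    have hn' : (0:ℝ) < (n:ℝ) := by exact_mod_cast hn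
    exact inv_ne_zero (ne_of_gt hn')
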